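/- For θ > 0 and w1, w2 ≥ 0 with w1 + w2 = 1, the quantity ∫ 1/(w1 e^{yθ} + w2 e^{−yθ}) · φ(y) e^{−θ²/2} dy lies in (0, 1], and equals 1 − ∫_{y≥0} [w1 w2 (e^{yθ} + e^{−yθ})(e^{yθ} − e^{−yθ})² / (w1 w2 (e^{yθ} − e^{−yθ})² + 1)] · φ(y) e^{−θ²/2} dy. -/

import Mathlib

open MeasureTheory Real

noncomputable def gauss (x : ℝ) : ℝ := (Real.sqrt (2 * Real.pi))⁻¹ * Real.exp (-(x ^ 2) / 2)

lemma gauss_pos (x : ℝ) : 0 < gauss x := by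
  unfold gauss
  positivity

lemma gauss_eq (x : ℝ) : gauss x = (Real.sqrt (2 * Real.pi))⁻¹ * Real.exp (-(1/2) * x ^ 2) := by
  unfold gauss; ring_nf

lemma integrable_gauss : Integrable gauss := by
  have : gauss = fun x => (Real.sqrt (2 * Real.pi))⁻¹ * Real.exp (-(1/2) * x ^ 2) := by
    funext x; exact gauss_eq x
  rw [this]
  exact (integrable_exp_neg_mul_sq (by norm_num : (0:ℝ) < 1/2)).const_mul _

lemma integral_gauss : ∫ x, gauss x = 1 := by
  simp only [gauss_eq]
  rw [MeasureTheory.integral_const_mul, integral_gaussian]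
  rw [inv_mul_eq_one₀ (by positivity)]
  rw [div_div_eq_mul_div, div_one, mul_comm]

lemma gauss_shift (c y : ℝ) :
    Real.exp (y * c) * (gauss y * Real.exp (-(c ^ 2) / 2)) = gauss (y - c) := by
  have h : Real.exp (y * c) * Real.exp (-(y ^ 2) / 2) * Real.exp (-(c ^ 2) / 2)
      = Real.exp (-((y - c) ^ 2) / 2) := by
    rw [← Real.exp_add, ← Real.exp_add]; congr 1; ring
  unfold gauss
  rw [← h]; ring

lemma integrable_gauss_shift (c : ℝ) : Integrable (fun y => gauss (y - c)) :=
  integrable_gauss.comp_sub_right c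

lemma integral_gauss_shift (c : ℝ) : ∫ y, gauss (y - c) = 1 := by
  rw [integral_sub_right_eq_self gauss c, integral_gauss]

lemma gauss_even (x : ℝ) : gauss (-x) = gauss x := by
  unfold gauss; rw [show (-x) ^ 2 = x ^ 2 by ring]

lemma continuous_gauss : Continuous gauss := by
  unfold gauss; fun_prop

lemma integrable_gauss_shift' (c : ℝ) : Integrable (fun y => gauss (y + c)) := by
  have := integrable_gauss.comp_sub_right (-c)
  simpa [sub_neg_eq_add] using this

lemma half_integral (θ : ℝ) :
    ∫ y in Set.Ici (0:ℝ), (gauss (y - θ) + gauss (y + θ)) = 1 := by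
  rw [integral_Ici_eq_integral_Ioi]
  rw [integral_add ((integrable_gauss_shift θ).integrableOn)
    ((integrable_gauss_shift' θ).integrableOn)]
  have h1 := integral_comp_neg_Ioi (0:ℝ) (fun x => gauss (x - θ))
  simp only [neg_zero] at h1
  have h2 : ∫ x in Set.Ioi (0:ℝ), gauss (x + θ) = ∫ x in Set.Iic (0:ℝ), gauss (x - θ) := by
    rw [← h1]
    apply integral_congr_ae
    filter_upwards with x
    rw [show -x - θ = -(x + θ) by ring, gauss_even]
  rw [h2, add_comm, intervalIntegral.integral_Iic_add_Ioi ((integrable_gauss_shift θ).integrableOn)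
    ((integrable_gauss_shift θ).integrableOn), integral_gauss_shift]

lemma integral_gauss_shift' (c : ℝ) : ∫ y, gauss (y + c) = 1 := by
  have := integral_gauss_shift (-c)
  simpa [sub_neg_eq_add] using this
theorem stmt_17 (θ w1 w2 : ℝ) (hθ : 0 < θ) (hw1 : 0 ≤ w1) (hw2 : 0 ≤ w2)
    (hsum : w1 + w2 = 1) :
    (∫ y : ℝ, (1 / (w1 * Real.exp (y * θ) + w2 * Real.exp (-(y * θ)))) *
        (gauss y * Real.exp (-(θ ^ 2) / 2))) ∈ Set.Ioc (0:ℝ) 1 ∧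
    (∫ y : ℝ, (1 / (w1 * Real.exp (y * θ) + w2 * Real.exp (-(y * θ)))) *
        (gauss y * Real.exp (-(θ ^ 2) / 2))) =
      1 - ∫ y in Set.Ici (0:ℝ),
        (w1 * w2 * (Real.exp (y * θ) + Real.exp (-(y * θ))) *
            (Real.exp (y * θ) - Real.exp (-(y * θ))) ^ 2 /
          (w1 * w2 * (Real.exp (y * θ) - Real.exp (-(y * θ))) ^ 2 + 1)) *
        (gauss y * Real.exp (-(θ ^ 2) / 2)) := by
  have hw1' : w1 ≤ 1 := by linarith
  have hw2' : w2 ≤ 1 := by linarith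
  have hab : ∀ y : ℝ, Real.exp (y * θ) * Real.exp (-(y * θ)) = 1 := fun y => by
    rw [← Real.exp_add, add_neg_cancel, Real.exp_zero]
  have hA : ∀ y : ℝ, 0 < w1 * Real.exp (y * θ) + w2 * Real.exp (-(y * θ)) := by
    intro y
    have hm : 0 < min (Real.exp (y * θ)) (Real.exp (-(y * θ))) :=
      lt_min (Real.exp_pos _) (Real.exp_pos _)
    have h1 := mul_nonneg hw1
      (sub_nonneg.2 (min_le_left (Real.exp (y * θ)) (Real.exp (-(y * θ)))))
    have h2 := mul_nonneg hw2
      (sub_nonneg.2 (min_le_right (Real.exp (y * θ)) (Real.exp (-(y * θ)))))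
    nlinarith
  have hB : ∀ y : ℝ, 0 < w1 * Real.exp (-(y * θ)) + w2 * Real.exp (y * θ) := by
    intro y
    have hm : 0 < min (Real.exp (y * θ)) (Real.exp (-(y * θ))) :=
      lt_min (Real.exp_pos _) (Real.exp_pos _)
    have h1 := mul_nonneg hw1
      (sub_nonneg.2 (min_le_right (Real.exp (y * θ)) (Real.exp (-(y * θ)))))
    have h2 := mul_nonneg hw2
      (sub_nonneg.2 (min_le_left (Real.exp (y * θ)) (Real.exp (-(y * θ)))))
    nlinarith
  have hkey : ∀ y : ℝ,
      (w1 * Real.exp (y * θ) + w2 * Real.exp (-(y * θ))) *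
        (w1 * Real.exp (-(y * θ)) + w2 * Real.exp (y * θ)) =
      w1 * w2 * (Real.exp (y * θ) - Real.exp (-(y * θ))) ^ 2 + 1 := by
    intro y
    linear_combination ((w1 + w2) ^ 2) * hab y + (w1 + w2 + 1) * hsum
  have hD1 : ∀ y : ℝ, (1:ℝ) ≤ w1 * w2 * (Real.exp (y * θ) - Real.exp (-(y * θ))) ^ 2 + 1 :=
    fun y => le_add_of_nonneg_left (mul_nonneg (mul_nonneg hw1 hw2) (sq_nonneg _))
  have hge : ∀ y : ℝ, 0 < gauss y * Real.exp (-(θ ^ 2) / 2) :=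
    fun y => mul_pos (gauss_pos y) (Real.exp_pos _)
  -- cosh integrand identity
  have hCg : ∀ y : ℝ, (Real.exp (y * θ) + Real.exp (-(y * θ))) *
      (gauss y * Real.exp (-(θ ^ 2) / 2)) = gauss (y - θ) + gauss (y + θ) := by
    intro y
    have h1 := gauss_shift θ y
    have h2 := gauss_shift (-θ) y
    rw [show y * -θ = -(y * θ) by ring, show (-θ : ℝ) ^ 2 = θ ^ 2 by ring,
      show y - -θ = y + θ by ring] at h2
    rw [← h1, ← h2]; ring
  have hHg : ∀ y : ℝ, (w1 * Real.exp (-(y * θ)) + w2 * Real.exp (y * θ)) *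
      (gauss y * Real.exp (-(θ ^ 2) / 2)) = w1 * gauss (y + θ) + w2 * gauss (y - θ) := by
    intro y
    have h1 := gauss_shift θ y
    have h2 := gauss_shift (-θ) y
    rw [show y * -θ = -(y * θ) by ring, show (-θ : ℝ) ^ 2 = θ ^ 2 by ring,
      show y - -θ = y + θ by ring] at h2
    rw [← h1, ← h2]; ring
  have IntC : Integrable (fun y : ℝ => (Real.exp (y * θ) + Real.exp (-(y * θ))) *
      (gauss y * Real.exp (-(θ ^ 2) / 2))) := by
    have : (fun y : ℝ => (Real.exp (y * θ) + Real.exp (-(y * θ))) *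
        (gauss y * Real.exp (-(θ ^ 2) / 2))) = fun y => gauss (y - θ) + gauss (y + θ) :=
      funext hCg
    rw [this]
    exact (integrable_gauss_shift θ).add (integrable_gauss_shift' θ)
  have IntH : Integrable (fun y : ℝ => (w1 * Real.exp (-(y * θ)) + w2 * Real.exp (y * θ)) *
      (gauss y * Real.exp (-(θ ^ 2) / 2))) := by
    have : (fun y : ℝ => (w1 * Real.exp (-(y * θ)) + w2 * Real.exp (y * θ)) *
        (gauss y * Real.exp (-(θ ^ 2) / 2))) =
        fun y => w1 * gauss (y + θ) + w2 * gauss (y - θ) := funext hHg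
    rw [this]
    exact ((integrable_gauss_shift' θ).const_mul w1).add ((integrable_gauss_shift θ).const_mul w2)
  have intHval : (∫ y : ℝ, (w1 * Real.exp (-(y * θ)) + w2 * Real.exp (y * θ)) *
      (gauss y * Real.exp (-(θ ^ 2) / 2))) = 1 := by
    simp only [hHg]
    rw [integral_add ((integrable_gauss_shift' θ).const_mul w1)
      ((integrable_gauss_shift θ).const_mul w2), integral_const_mul, integral_const_mul,
      integral_gauss_shift, integral_gauss_shift']
    linarith
  have hfpos : ∀ y : ℝ, 0 < (1 / (w1 * Real.exp (y * θ) + w2 * Real.exp (-(y * θ)))) *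
      (gauss y * Real.exp (-(θ ^ 2) / 2)) :=
    fun y => mul_pos (one_div_pos.2 (hA y)) (hge y)
  have hfleH : ∀ y : ℝ, (1 / (w1 * Real.exp (y * θ) + w2 * Real.exp (-(y * θ)))) *
      (gauss y * Real.exp (-(θ ^ 2) / 2)) ≤
      (w1 * Real.exp (-(y * θ)) + w2 * Real.exp (y * θ)) *
      (gauss y * Real.exp (-(θ ^ 2) / 2)) := by
    intro y
    refine mul_le_mul_of_nonneg_right ?_ (hge y).le
    rw [div_le_iff₀ (hA y)]
    nlinarith [hkey y, hD1 y]
  have contD : Continuous fun y : ℝ => w1 * Real.exp (y * θ) + w2 * Real.exp (-(y * θ)) := by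
    fun_prop
  have contf : Continuous fun y : ℝ =>
      (1 / (w1 * Real.exp (y * θ) + w2 * Real.exp (-(y * θ)))) *
      (gauss y * Real.exp (-(θ ^ 2) / 2)) := by
    exact (continuous_const.div contD fun y => (hA y).ne').mul
      (continuous_gauss.mul continuous_const)
  have Intf : Integrable (fun y : ℝ =>
      (1 / (w1 * Real.exp (y * θ) + w2 * Real.exp (-(y * θ)))) *
      (gauss y * Real.exp (-(θ ^ 2) / 2))) := by
    refine IntH.mono contf.aestronglyMeasurable (ae_of_all _ fun y => ?_)
    rw [Real.norm_eq_abs, Real.norm_eq_abs, abs_of_pos (hfpos y),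
      abs_of_pos (mul_pos (hB y) (hge y))]
    exact hfleH y

  -- the symmetrized integrand facts
  have hD'pos : ∀ y : ℝ, 0 < w1 * w2 * (Real.exp (y * θ) - Real.exp (-(y * θ))) ^ 2 + 1 :=
    fun y => lt_of_lt_of_le one_pos (hD1 y)
  have contD' : Continuous fun y : ℝ =>
      w1 * w2 * (Real.exp (y * θ) - Real.exp (-(y * θ))) ^ 2 + 1 := by fun_prop
  have hsym : ∀ y : ℝ,
      (1 / (w1 * Real.exp (-(y * θ)) + w2 * Real.exp (y * θ))) *
        (gauss y * Real.exp (-(θ ^ 2) / 2)) +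
      (1 / (w1 * Real.exp (y * θ) + w2 * Real.exp (-(y * θ)))) *
        (gauss y * Real.exp (-(θ ^ 2) / 2)) =
      ((Real.exp (y * θ) + Real.exp (-(y * θ))) /
          (w1 * w2 * (Real.exp (y * θ) - Real.exp (-(y * θ))) ^ 2 + 1)) *
        (gauss y * Real.exp (-(θ ^ 2) / 2)) := by
    intro y
    rw [← add_mul]
    congr 1
    rw [div_add_div _ _ (hB y).ne' (hA y).ne', one_mul, mul_one]
    rw [show w1 * Real.exp (y * θ) + w2 * Real.exp (-(y * θ)) +
        (w1 * Real.exp (-(y * θ)) + w2 * Real.exp (y * θ)) =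
        Real.exp (y * θ) + Real.exp (-(y * θ)) from by
      linear_combination (Real.exp (y * θ) + Real.exp (-(y * θ))) * hsum]
    rw [show (w1 * Real.exp (-(y * θ)) + w2 * Real.exp (y * θ)) *
        (w1 * Real.exp (y * θ) + w2 * Real.exp (-(y * θ))) =
        w1 * w2 * (Real.exp (y * θ) - Real.exp (-(y * θ))) ^ 2 + 1 from by
      rw [mul_comm]; exact hkey y]
  have contg : Continuous fun y : ℝ =>
      ((Real.exp (y * θ) + Real.exp (-(y * θ))) /
          (w1 * w2 * (Real.exp (y * θ) - Real.exp (-(y * θ))) ^ 2 + 1)) *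
        (gauss y * Real.exp (-(θ ^ 2) / 2)) :=
    ((Continuous.div (by fun_prop) contD' fun y => (hD'pos y).ne').mul
      (continuous_gauss.mul continuous_const))
  have hgpos : ∀ y : ℝ, 0 < ((Real.exp (y * θ) + Real.exp (-(y * θ))) /
      (w1 * w2 * (Real.exp (y * θ) - Real.exp (-(y * θ))) ^ 2 + 1)) *
      (gauss y * Real.exp (-(θ ^ 2) / 2)) :=
    fun y => mul_pos (div_pos (by positivity) (hD'pos y)) (hge y)
  have hgleC : ∀ y : ℝ, ((Real.exp (y * θ) + Real.exp (-(y * θ))) /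
      (w1 * w2 * (Real.exp (y * θ) - Real.exp (-(y * θ))) ^ 2 + 1)) *
      (gauss y * Real.exp (-(θ ^ 2) / 2)) ≤
      (Real.exp (y * θ) + Real.exp (-(y * θ))) * (gauss y * Real.exp (-(θ ^ 2) / 2)) :=
    fun y => mul_le_mul_of_nonneg_right (div_le_self (by positivity) (hD1 y)) (hge y).le
  have Intg : Integrable (fun y : ℝ => ((Real.exp (y * θ) + Real.exp (-(y * θ))) /
      (w1 * w2 * (Real.exp (y * θ) - Real.exp (-(y * θ))) ^ 2 + 1)) *
      (gauss y * Real.exp (-(θ ^ 2) / 2))) := by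
    refine IntC.mono contg.aestronglyMeasurable (ae_of_all _ fun y => ?_)
    rw [Real.norm_eq_abs, Real.norm_eq_abs, abs_of_pos (hgpos y),
      abs_of_pos (mul_pos (by positivity) (hge y))]
    exact hgleC y
  have hgr : ∀ y : ℝ, ((Real.exp (y * θ) + Real.exp (-(y * θ))) /
      (w1 * w2 * (Real.exp (y * θ) - Real.exp (-(y * θ))) ^ 2 + 1)) *
      (gauss y * Real.exp (-(θ ^ 2) / 2)) +
      (w1 * w2 * (Real.exp (y * θ) + Real.exp (-(y * θ))) *
          (Real.exp (y * θ) - Real.exp (-(y * θ))) ^ 2 /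
        (w1 * w2 * (Real.exp (y * θ) - Real.exp (-(y * θ))) ^ 2 + 1)) *
      (gauss y * Real.exp (-(θ ^ 2) / 2)) =
      (Real.exp (y * θ) + Real.exp (-(y * θ))) * (gauss y * Real.exp (-(θ ^ 2) / 2)) := by
    intro y
    rw [← add_mul, ← add_div]
    congr 1
    rw [show Real.exp (y * θ) + Real.exp (-(y * θ)) +
        w1 * w2 * (Real.exp (y * θ) + Real.exp (-(y * θ))) *
          (Real.exp (y * θ) - Real.exp (-(y * θ))) ^ 2 =
        (Real.exp (y * θ) + Real.exp (-(y * θ))) *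
          (w1 * w2 * (Real.exp (y * θ) - Real.exp (-(y * θ))) ^ 2 + 1) from by ring]
    rw [mul_div_assoc, div_self (hD'pos y).ne', mul_one]
  have hrnonneg : ∀ y : ℝ, 0 ≤ (w1 * w2 * (Real.exp (y * θ) + Real.exp (-(y * θ))) *
      (Real.exp (y * θ) - Real.exp (-(y * θ))) ^ 2 /
      (w1 * w2 * (Real.exp (y * θ) - Real.exp (-(y * θ))) ^ 2 + 1)) *
      (gauss y * Real.exp (-(θ ^ 2) / 2)) := by
    intro y
    have h1 : (0:ℝ) ≤ w1 * w2 * (Real.exp (y * θ) + Real.exp (-(y * θ))) *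
        (Real.exp (y * θ) - Real.exp (-(y * θ))) ^ 2 := by positivity
    exact mul_nonneg (div_nonneg h1 (hD'pos y).le) (hge y).le
  have hrleC : ∀ y : ℝ, (w1 * w2 * (Real.exp (y * θ) + Real.exp (-(y * θ))) *
      (Real.exp (y * θ) - Real.exp (-(y * θ))) ^ 2 /
      (w1 * w2 * (Real.exp (y * θ) - Real.exp (-(y * θ))) ^ 2 + 1)) *
      (gauss y * Real.exp (-(θ ^ 2) / 2)) ≤
      (Real.exp (y * θ) + Real.exp (-(y * θ))) * (gauss y * Real.exp (-(θ ^ 2) / 2)) := by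
    intro y
    have := hgr y
    have := (hgpos y).le
    linarith
  have contr : Continuous fun y : ℝ => (w1 * w2 * (Real.exp (y * θ) + Real.exp (-(y * θ))) *
      (Real.exp (y * θ) - Real.exp (-(y * θ))) ^ 2 /
      (w1 * w2 * (Real.exp (y * θ) - Real.exp (-(y * θ))) ^ 2 + 1)) *
      (gauss y * Real.exp (-(θ ^ 2) / 2)) :=
    ((Continuous.div (by fun_prop) contD' fun y => (hD'pos y).ne').mul
      (continuous_gauss.mul continuous_const))
  have Intr : Integrable (fun y : ℝ => (w1 * w2 * (Real.exp (y * θ) + Real.exp (-(y * θ))) *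
      (Real.exp (y * θ) - Real.exp (-(y * θ))) ^ 2 /
      (w1 * w2 * (Real.exp (y * θ) - Real.exp (-(y * θ))) ^ 2 + 1)) *
      (gauss y * Real.exp (-(θ ^ 2) / 2))) := by
    refine IntC.mono contr.aestronglyMeasurable (ae_of_all _ fun y => ?_)
    rw [Real.norm_eq_abs, Real.norm_eq_abs, abs_of_nonneg (hrnonneg y),
      abs_of_pos (mul_pos (by positivity) (hge y))]
    exact hrleC y
  -- f(-y) integrand
  have contfneg : Continuous fun y : ℝ =>
      (1 / (w1 * Real.exp (-(y * θ)) + w2 * Real.exp (y * θ))) *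
      (gauss y * Real.exp (-(θ ^ 2) / 2)) := by
    exact (continuous_const.div (by fun_prop) fun y => (hB y).ne').mul
      (continuous_gauss.mul continuous_const)
  have hfnegpos : ∀ y : ℝ, 0 < (1 / (w1 * Real.exp (-(y * θ)) + w2 * Real.exp (y * θ))) *
      (gauss y * Real.exp (-(θ ^ 2) / 2)) :=
    fun y => mul_pos (one_div_pos.2 (hB y)) (hge y)
  have hfnegleC : ∀ y : ℝ, (1 / (w1 * Real.exp (-(y * θ)) + w2 * Real.exp (y * θ))) *
      (gauss y * Real.exp (-(θ ^ 2) / 2)) ≤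
      (Real.exp (y * θ) + Real.exp (-(y * θ))) * (gauss y * Real.exp (-(θ ^ 2) / 2)) := by
    intro y
    refine mul_le_mul_of_nonneg_right ?_ (hge y).le
    rw [div_le_iff₀ (hB y)]
    have hextra : 0 ≤ (Real.exp (y * θ) + Real.exp (-(y * θ)) -
        (w1 * Real.exp (y * θ) + w2 * Real.exp (-(y * θ)))) *
        (w1 * Real.exp (-(y * θ)) + w2 * Real.exp (y * θ)) := by
      have ha : 0 ≤ (1 - w1) * Real.exp (y * θ) := mul_nonneg (by linarith) (Real.exp_pos _).le
      have hb' : 0 ≤ (1 - w2) * Real.exp (-(y * θ)) := mul_nonneg (by linarith) (Real.exp_pos _).le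
      exact mul_nonneg (by nlinarith) (hB y).le
    nlinarith [hkey y, hD1 y, hextra]
  have Intfneg : Integrable (fun y : ℝ =>
      (1 / (w1 * Real.exp (-(y * θ)) + w2 * Real.exp (y * θ))) *
      (gauss y * Real.exp (-(θ ^ 2) / 2))) := by
    refine IntC.mono contfneg.aestronglyMeasurable (ae_of_all _ fun y => ?_)
    rw [Real.norm_eq_abs, Real.norm_eq_abs, abs_of_pos (hfnegpos y),
      abs_of_pos (mul_pos (by positivity) (hge y))]
    exact hfnegleC y
  -- reflection identity for the Iic part
  have e2 : (∫ y in Set.Iic (0:ℝ),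
      (1 / (w1 * Real.exp (y * θ) + w2 * Real.exp (-(y * θ)))) *
      (gauss y * Real.exp (-(θ ^ 2) / 2))) =
      ∫ y in Set.Ioi (0:ℝ),
      (1 / (w1 * Real.exp (-(y * θ)) + w2 * Real.exp (y * θ))) *
      (gauss y * Real.exp (-(θ ^ 2) / 2)) := by
    have h := integral_comp_neg_Ioi (0:ℝ) (fun y : ℝ =>
      (1 / (w1 * Real.exp (y * θ) + w2 * Real.exp (-(y * θ)))) *
      (gauss y * Real.exp (-(θ ^ 2) / 2)))
    simp only [neg_zero] at h
    rw [← h]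
    apply integral_congr_ae
    filter_upwards with y
    rw [show -y * θ = -(y * θ) by ring, neg_neg, gauss_even]
  have hEhalf : (∫ y in Set.Ici (0:ℝ),
      (Real.exp (y * θ) + Real.exp (-(y * θ))) * (gauss y * Real.exp (-(θ ^ 2) / 2))) = 1 := by
    simp only [hCg]
    exact half_integral θ
  constructor
  · constructor
    · refine (integral_pos_iff_support_of_nonneg (fun y => (hfpos y).le) Intf).2 ?_
      have hs : (Function.support fun y : ℝ =>
          (1 / (w1 * Real.exp (y * θ) + w2 * Real.exp (-(y * θ)))) *
          (gauss y * Real.exp (-(θ ^ 2) / 2))) = Set.univ :=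
        Set.eq_univ_of_forall fun y => (hfpos y).ne'
      rw [hs, Real.volume_univ]
      exact ENNReal.zero_lt_top
    · calc (∫ y : ℝ, (1 / (w1 * Real.exp (y * θ) + w2 * Real.exp (-(y * θ)))) *
            (gauss y * Real.exp (-(θ ^ 2) / 2)))
          ≤ ∫ y : ℝ, (w1 * Real.exp (-(y * θ)) + w2 * Real.exp (y * θ)) *
            (gauss y * Real.exp (-(θ ^ 2) / 2)) := integral_mono Intf IntH hfleH
        _ = 1 := intHval
  · rw [← intervalIntegral.integral_Iic_add_Ioi Intf.integrableOn Intf.integrableOn, e2,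
      ← integral_add Intfneg.integrableOn Intf.integrableOn]
    simp only [hsym]
    rw [← integral_Ici_eq_integral_Ioi, eq_sub_iff_add_eq,
      ← integral_add Intg.integrableOn Intr.integrableOn]
    simp only [hgr]
    exact hEhalf
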